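/- Let ν > 1 be real and a₀ > 0. Define w(0) = a₀ and w(k) = k^{−ν} for k ≥ 1, and S₂(n) = Σ_{k=0}^{n} w(k)·w(n−k). Then there exists a constant B = 2a₀ + 2^{ν+1} + 2^{ν+1}/(ν−1) such that for all n ≥ 2, S₂(n) ≤ B·n^{−ν}. -/

import Mathlib

/-- Weighted power-law sequence: `w 0 = a₀`, `w k = k^(-ν)` for `k ≥ 1`. -/
noncomputable def plw (a₀ ν : ℝ) (k : ℕ) : ℝ :=
  if k = 0 then a₀ else (k : ℝ) ^ (-ν)

/-- `S₂ n`: the self-convolution of `plw a₀ ν`. -/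
noncomputable def S2 (a₀ ν : ℝ) (n : ℕ) : ℝ :=
  ∑ k ∈ Finset.range (n + 1), plw a₀ ν k * plw a₀ ν (n - k)

open Finset Real

/-! For `0 < k < n` the larger of `k` and `n - k` is at least `n / 2`, so
`k^(-ν) (n-k)^(-ν) ≤ 2^ν n^(-ν) (k^(-ν) + (n-k)^(-ν))`. Summing over `0 < k < n` and using the
symmetry `k ↦ n - k`, the interior of the convolution is at most `2^(ν+1) n^(-ν) ∑_{k ≥ 1} k^(-ν)`,
and the p-series is at most `1 + ∫_1^∞ x^(-ν) dx = 1 + 1/(ν-1)`. The two end terms contribute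
`2 a₀ n^(-ν)`. -/

theorem rpow_neg_le_two_rpow_mul_add_rpow_neg {ν a b : ℝ} (hν : 0 ≤ ν) (ha : 0 < a) (hab : a ≤ b) :
    b ^ (-ν) ≤ 2 ^ ν * (a + b) ^ (-ν) := by
  calc b ^ (-ν) ≤ ((a + b) / 2) ^ (-ν) :=
        rpow_le_rpow_of_nonpos (by linarith) (by linarith) (by linarith)
    _ = 2 ^ ν * (a + b) ^ (-ν) := by
        rw [div_rpow (by linarith) zero_le_two, rpow_neg zero_le_two, div_inv_eq_mul, mul_comm]

theorem rpow_neg_mul_rpow_neg_le {ν a b : ℝ} (hν : 0 ≤ ν) (ha : 0 < a) (hb : 0 < b) :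
    a ^ (-ν) * b ^ (-ν) ≤ 2 ^ ν * (a + b) ^ (-ν) * (a ^ (-ν) + b ^ (-ν)) := by
  wlog hab : a ≤ b generalizing a b
  · have := this hb ha (le_of_not_ge hab)
    rwa [mul_comm, add_comm b, add_comm (b ^ (-ν))] at this
  have ha' : 0 < a ^ (-ν) := rpow_pos_of_pos ha _
  have hb' : 0 < b ^ (-ν) := rpow_pos_of_pos hb _
  calc a ^ (-ν) * b ^ (-ν) ≤ a ^ (-ν) * (2 ^ ν * (a + b) ^ (-ν)) :=
        mul_le_mul_of_nonneg_left (rpow_neg_le_two_rpow_mul_add_rpow_neg hν ha hab) ha'.le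
    _ ≤ 2 ^ ν * (a + b) ^ (-ν) * (a ^ (-ν) + b ^ (-ν)) := by
        rw [mul_comm]; gcongr; linarith

theorem integral_one_rpow_neg_le {ν b : ℝ} (hν : 1 < ν) (hb : 1 ≤ b) :
    ∫ x in (1 : ℝ)..b, x ^ (-ν) ≤ 1 / (ν - 1) := by
  have h0 : (0 : ℝ) ∉ Set.uIcc 1 b := by
    rw [Set.uIcc_of_le hb]; simp
  rw [integral_rpow (Or.inr ⟨by linarith, h0⟩), one_rpow]
  have : 0 ≤ b ^ (-ν + 1) := rpow_nonneg (by linarith) _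
  rw [show (b ^ (-ν + 1) - 1) / (-ν + 1) = (1 - b ^ (-ν + 1)) / (ν - 1) by
    rw [← neg_div_neg_eq]; ring_nf]
  gcongr
  linarith

theorem sum_range_rpow_neg_le {ν : ℝ} (hν : 1 < ν) (m : ℕ) :
    ∑ j ∈ range m, ((j : ℝ) + 1) ^ (-ν) ≤ 1 + 1 / (ν - 1) := by
  cases m with
  | zero =>
    rw [sum_range_zero]
    have : 0 < ν - 1 := sub_pos.mpr hν
    positivity
  | succ m =>
    have hanti : AntitoneOn (fun x : ℝ ↦ x ^ (-ν)) (Set.Icc 1 (1 + m)) := fun x hx y _ hxy ↦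
      rpow_le_rpow_of_nonpos (by linarith [hx.1]) hxy (by linarith)
    have hint := hanti.sum_le_integral.trans
      (integral_one_rpow_neg_le hν (by simp : (1 : ℝ) ≤ 1 + m))
    rw [sum_range_succ', Nat.cast_zero, zero_add, one_rpow, add_comm]
    push_cast at hint
    gcongr
    convert hint using 3
    push_cast; ring

theorem sum_range_succ_mul_sub_eq {R : Type*} [CommSemiring R] (f : ℕ → R) {n : ℕ} (hn : 1 ≤ n) :
    ∑ k ∈ range (n + 1), f k * f (n - k) =
      2 * (f 0 * f n) + ∑ j ∈ range (n - 1), f (j + 1) * f (n - (j + 1)) := by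
  obtain ⟨m, rfl⟩ := Nat.exists_eq_add_of_le' hn
  rw [sum_range_succ, sum_range_succ', Nat.add_sub_cancel, Nat.sub_zero, Nat.sub_self]
  ring

theorem sum_range_sub_one_reflect {M : Type*} [AddCommMonoid M] (g : ℕ → M) (n : ℕ) :
    ∑ j ∈ range (n - 1), g (n - (j + 1)) = ∑ j ∈ range (n - 1), g (j + 1) := by
  rw [← sum_range_reflect (fun j ↦ g (j + 1)) (n - 1)]
  refine sum_congr rfl fun j hj ↦ congrArg g ?_
  rw [mem_range] at hj
  omega

theorem plw_zero (a₀ ν : ℝ) : plw a₀ ν 0 = a₀ := if_pos rfl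

theorem plw_of_ne_zero (a₀ ν : ℝ) {k : ℕ} (hk : k ≠ 0) : plw a₀ ν k = (k : ℝ) ^ (-ν) := if_neg hk

theorem plw_mul_plw_sub_le (a₀ : ℝ) {ν : ℝ} (hν : 0 ≤ ν) {n k : ℕ} (hk : 0 < k) (hkn : k < n) :
    plw a₀ ν k * plw a₀ ν (n - k) ≤ 2 ^ ν * (n : ℝ) ^ (-ν) * (plw a₀ ν k + plw a₀ ν (n - k)) := by
  rw [plw_of_ne_zero a₀ ν hk.ne', plw_of_ne_zero a₀ ν (Nat.sub_ne_zero_of_lt hkn)]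
  have := rpow_neg_mul_rpow_neg_le hν (Nat.cast_pos.mpr hk)
    (Nat.cast_pos.mpr (Nat.sub_pos_of_lt hkn))
  rwa [← Nat.cast_add, Nat.add_sub_cancel' hkn.le] at this

theorem sum_range_plw_succ_le (a₀ : ℝ) {ν : ℝ} (hν : 1 < ν) (m : ℕ) :
    ∑ j ∈ range m, plw a₀ ν (j + 1) ≤ 1 + 1 / (ν - 1) := by
  simp_rw [plw_of_ne_zero a₀ ν (Nat.succ_ne_zero _), Nat.cast_succ]
  exact sum_range_rpow_neg_le hν m

theorem S2_upper_bound_general (ν a₀ : ℝ) (hν : 1 < ν) :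
    ∃ B : ℝ, B = 2 * a₀ + 2 ^ (ν + 1) + 2 ^ (ν + 1) / (ν - 1) ∧
      ∀ n : ℕ, 2 ≤ n → S2 a₀ ν n ≤ B * (n : ℝ) ^ (-ν) := by
  refine ⟨_, rfl, fun n hn ↦ ?_⟩
  have hinterior : ∑ j ∈ range (n - 1), plw a₀ ν (j + 1) * plw a₀ ν (n - (j + 1)) ≤
      2 ^ ν * (n : ℝ) ^ (-ν) * (2 * ∑ j ∈ range (n - 1), plw a₀ ν (j + 1)) := calc
    _ ≤ ∑ j ∈ range (n - 1), 2 ^ ν * (n : ℝ) ^ (-ν) * (plw a₀ ν (j + 1) + plw a₀ ν (n - (j + 1))) :=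
      sum_le_sum fun j hj ↦
        plw_mul_plw_sub_le a₀ (by linarith) j.succ_pos (by rw [mem_range] at hj; omega)
    _ = _ := by rw [← mul_sum, sum_add_distrib, sum_range_sub_one_reflect, two_mul]
  rw [S2, sum_range_succ_mul_sub_eq _ (by omega), plw_zero, plw_of_ne_zero a₀ ν (by omega)]
  calc _ ≤ 2 * (a₀ * (n : ℝ) ^ (-ν)) + 2 ^ ν * (n : ℝ) ^ (-ν) * (2 * (1 + 1 / (ν - 1))) := by
        grw [hinterior, sum_range_plw_succ_le a₀ hν]
    _ = _ := by rw [rpow_add_one two_ne_zero]; ring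

theorem S2_upper_bound (ν a₀ : ℝ) (hν : 1 < ν) (ha : 0 < a₀) :
    ∃ B : ℝ, B = 2 * a₀ + 2 ^ (ν + 1) + 2 ^ (ν + 1) / (ν - 1) ∧
      ∀ n : ℕ, 2 ≤ n → S2 a₀ ν n ≤ B * (n : ℝ) ^ (-ν) :=
  S2_upper_bound_general ν a₀ hν
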